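/- arXiv:2206.03662 — 5 statements merged into one kernel-verified Lean document; each statement's English description precedes it below -/
import Mathlib

section
/- (Theorem 2(a): solution set of the semiparametric estimating equations.) Let f(x) = det(V0)^{−1/2} ψ(d(x,μ0,V0)) be an elliptical density on ℝ^p, let w : [0,∞) → [0,∞) be measurable, and let a > 0 be such that ∫ w(d(x,μ0,aV0)) (1 + ‖x−μ0‖²) f(x) dx < ∞. Then the pair (μ, V) = (μ0, aV0) solves the system of estimating equations: ∫ w(d(x,μ,V)) (x−μ) f(x) dx = 0 and p·∫ w(d(x,μ,V)) (x−μ)(x−μ)ᵀ f(x) dx = ( ∫ w(d(x,μ,V)) d(x,μ,V) f(x) dx ) · V. -/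
open MeasureTheory Matrix Finset

/-- Mahalanobis-type squared distance `d(x, μ, V) = (x−μ)ᵀ V⁻¹ (x−μ)`. -/
noncomputable def mahal {p : ℕ} (x μ : EuclideanSpace ℝ (Fin p))
    (V : Matrix (Fin p) (Fin p) ℝ) : ℝ :=
  ∑ i, ∑ j, (x i - μ i) * V⁻¹ i j * (x j - μ j)

/-!
The first equation holds because the integrand is odd under the reflection `x ↦ 2μ₀ - x`, which
preserves `d(x, μ₀, V)`. For the second, write `V₀ = L Lᵀ` and substitute `x = μ₀ + L y`: then
`d(x, μ₀, V₀) = ‖y‖²`, `|det L| = √(det V₀)` cancels the normalisation of `f`, and both sides become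
integrals of a radial weight `g(‖y‖²)` against `(L y)ᵢ (L y)ⱼ` and `‖y‖²`. Sign flips and
transpositions of coordinates are isometries, so the second moments `∫ g(‖y‖²) yₖ yₗ` form a
multiple of the identity whose trace is `∫ g(‖y‖²) ‖y‖²`; hence `p ∫ g(‖y‖²) (L y)ᵢ (L y)ⱼ` is
`(L Lᵀ)ᵢⱼ ∫ g(‖y‖²) ‖y‖²`. The moment condition on `w` makes all these integrals finite.
-/

theorem integral_eq_zero_of_comp_sub_eq_neg {G E : Type*} [MeasurableSpace G] [AddGroup G]
    [MeasurableAdd G] [MeasurableNeg G] [NormedAddCommGroup E] [NormedSpace ℝ E]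
    (μ : Measure G) [μ.IsNegInvariant] [μ.IsAddLeftInvariant] {F : G → E} (c : G)
    (hF : ∀ x, F (c - x) = -F x) : ∫ x, F x ∂μ = 0 := by
  have h := integral_sub_left_eq_self F μ c
  simp only [hF, integral_neg] at h
  have h2 : (2 : ℝ) • ∫ x, F x ∂μ = 0 := by
    rw [two_smul]; nth_rewrite 1 [← h]; exact neg_add_cancel _
  exact (smul_eq_zero.mp h2).resolve_left two_ne_zero

theorem Matrix.sqrt_det_mul_transpose {ι : Type*} [Fintype ι] [DecidableEq ι] (L : Matrix ι ι ℝ) :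
    √(L * Lᵀ).det = |L.det| := by
  rw [det_mul, det_transpose, Real.sqrt_mul_self_eq_abs]

open scoped MatrixOrder in
theorem Matrix.PosDef.exists_eq_mul_transpose {ι : Type*} [Fintype ι] [DecidableEq ι]
    {V : Matrix ι ι ℝ} (hV : V.PosDef) : ∃ L : Matrix ι ι ℝ, V = L * Lᵀ ∧ IsUnit L.det := by
  obtain ⟨B, hB⟩ := CStarAlgebra.nonneg_iff_eq_star_mul_self.mp hV.posSemidef.nonneg
  rw [star_eq_conjTranspose, conjTranspose_eq_transpose_of_trivial] at hB
  refine ⟨Bᵀ, by rwa [transpose_transpose], ?_⟩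
  have hdet := hV.det_pos
  rw [hB, det_mul, det_transpose] at hdet
  rw [det_transpose]
  exact isUnit_iff_ne_zero.2 fun h => by simp [h] at hdet

section Mahal

variable {p : ℕ}

theorem mahal_eq_dotProduct (x μ : EuclideanSpace ℝ (Fin p)) (V : Matrix (Fin p) (Fin p) ℝ) :
    mahal x μ V = (x - μ).ofLp ⬝ᵥ V⁻¹ *ᵥ (x - μ).ofLp := by
  simp [mahal, dotProduct, mulVec, Finset.mul_sum, mul_assoc]

theorem mahal_add_self_sub (x μ : EuclideanSpace ℝ (Fin p)) (V : Matrix (Fin p) (Fin p) ℝ) :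
    mahal (μ + μ - x) μ V = mahal x μ V := by
  rw [mahal_eq_dotProduct, mahal_eq_dotProduct, show μ + μ - x - μ = -(x - μ) by abel,
    WithLp.ofLp_neg, mulVec_neg, neg_dotProduct, dotProduct_neg, neg_neg]

theorem mahal_smul (x μ : EuclideanSpace ℝ (Fin p)) {V : Matrix (Fin p) (Fin p) ℝ}
    (hV : IsUnit V.det) {a : ℝ} (ha : a ≠ 0) : mahal x μ (a • V) = a⁻¹ * mahal x μ V := by
  have : Invertible a := invertibleOfNonzero ha
  rw [mahal_eq_dotProduct, mahal_eq_dotProduct, Matrix.inv_smul V a hV, invOf_eq_inv,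
    smul_mulVec, dotProduct_smul, smul_eq_mul]

theorem mahal_add_toLpLin_mul_transpose (μ y : EuclideanSpace ℝ (Fin p))
    {L : Matrix (Fin p) (Fin p) ℝ} (hL : IsUnit L.det) :
    mahal (μ + toLpLin 2 2 L y) μ (L * Lᵀ) = ‖y‖ ^ 2 := by
  have hLV : Lᵀ * (L * Lᵀ)⁻¹ * L = 1 := by
    rw [Matrix.mul_inv_rev, ← Matrix.mul_assoc Lᵀ, mul_nonsing_inv _ (by rwa [det_transpose]),
      Matrix.one_mul, nonsing_inv_mul _ hL]
  rw [mahal_eq_dotProduct, add_sub_cancel_left, toLpLin_apply, WithLp.ofLp_toLp, mulVec_mulVec,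
    dotProduct_mulVec, ← vecMul_transpose, vecMul_vecMul, ← Matrix.mul_assoc, hLV, vecMul_one,
    EuclideanSpace.real_norm_sq_eq]
  simp [dotProduct, sq]

theorem integral_mahal_smul_sub_eq_zero (μ : EuclideanSpace ℝ (Fin p))
    (V : Matrix (Fin p) (Fin p) ℝ) (u : ℝ → ℝ) : ∫ x, u (mahal x μ V) • (x - μ) = 0 :=
  integral_eq_zero_of_comp_sub_eq_neg volume (μ + μ) fun x => by
    rw [mahal_add_self_sub, show μ + μ - x - μ = -(x - μ) by abel, smul_neg]

end Mahal

section ChangeOfVariables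

variable {E F : Type*} [NormedAddCommGroup E] [NormedSpace ℝ E] [MeasurableSpace E] [BorelSpace E]
  [FiniteDimensional ℝ E] [NormedAddCommGroup F] {T : E →ₗ[ℝ] E}

theorem measurableEmbedding_const_add_linearMap (hT : LinearMap.det T ≠ 0) (c : E) :
    MeasurableEmbedding fun y => c + T y :=
  (Homeomorph.addLeft c).measurableEmbedding.comp
    (T.equivOfDetNeZero hT).toContinuousLinearEquiv.toHomeomorph.measurableEmbedding

variable (μ : Measure E) [μ.IsAddHaarMeasure]

theorem map_const_add_linearMap_addHaar (hT : LinearMap.det T ≠ 0) (c : E) :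
    Measure.map (fun y => c + T y) μ = ENNReal.ofReal |(LinearMap.det T)⁻¹| • μ := by
  rw [show (fun y => c + T y) = (c + ·) ∘ T from rfl,
    ← Measure.map_map (measurable_const_add c) T.continuous_of_finiteDimensional.measurable,
    Measure.map_linearMap_addHaar_eq_smul_addHaar μ hT, Measure.map_smul, map_add_left_eq_self]

theorem integral_comp_const_add_linearMap [NormedSpace ℝ F] (hT : LinearMap.det T ≠ 0) (c : E)
    (G : E → F) : ∫ y, G (c + T y) ∂μ = |(LinearMap.det T)⁻¹| • ∫ x, G x ∂μ := by
  rw [← (measurableEmbedding_const_add_linearMap hT c).integral_map,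
    map_const_add_linearMap_addHaar μ hT, integral_smul_measure,
    ENNReal.toReal_ofReal (abs_nonneg _)]

theorem integrable_comp_const_add_linearMap_iff (hT : LinearMap.det T ≠ 0) (c : E) {G : E → F} :
    Integrable (fun y => G (c + T y)) μ ↔ Integrable G μ := by
  rw [← Function.comp_def, ← (measurableEmbedding_const_add_linearMap hT c).integrable_map_iff,
    map_const_add_linearMap_addHaar μ hT]
  exact integrable_smul_measure (by simpa using hT) ENNReal.ofReal_ne_top

end ChangeOfVariables

theorem Integrable.mul_norm_sq_of_mul_one_add_norm_sq {E : Type*} [NormedAddCommGroup E]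
    [NormedSpace ℝ E] [FiniteDimensional ℝ E] [MeasurableSpace E] [BorelSpace E] {μ : Measure E}
    {T : E →ₗ[ℝ] E} (hT : LinearMap.det T ≠ 0) {h : E → ℝ}
    (hh : Integrable (fun y => h y * (1 + ‖T y‖ ^ 2)) μ) :
    Integrable (fun y => h y * ‖y‖ ^ 2) μ := by
  set S := (T.equivOfDetNeZero hT).toContinuousLinearEquiv
  set C := ‖(S.symm : E →L[ℝ] E)‖
  have hnorm (y : E) : ‖y‖ ≤ C * ‖T y‖ := by
    have := (S.symm : E →L[ℝ] E).le_opNorm (S y)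
    rwa [ContinuousLinearEquiv.coe_coe, S.symm_apply_apply] at this
  have hcont : Continuous fun y => ‖y‖ ^ 2 / (1 + ‖T y‖ ^ 2) :=
    (continuous_norm.pow 2).div (continuous_const.add
      ((T.continuous_of_finiteDimensional.norm).pow 2)) fun y => by positivity
  refine (hh.bdd_mul (c := C ^ 2) hcont.aestronglyMeasurable
    (.of_forall fun y => ?_)).congr (.of_forall fun y => ?_)
  · rw [Real.norm_of_nonneg (by positivity), div_le_iff₀ (by positivity)]
    calc ‖y‖ ^ 2 ≤ (C * ‖T y‖) ^ 2 := by gcongr; exact hnorm y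
      _ ≤ C ^ 2 * (1 + ‖T y‖ ^ 2) := by nlinarith [sq_nonneg C]
  · simp only
    field_simp

section Radial

variable {ι : Type*} [Fintype ι] (g : ℝ → ℝ)

theorem integrable_radial_mul_coord_mul_coord
    (hg : Integrable fun y : EuclideanSpace ℝ ι => g (‖y‖ ^ 2) * ‖y‖ ^ 2) (k l : ι) :
    Integrable fun y : EuclideanSpace ℝ ι => g (‖y‖ ^ 2) * (y k * y l) := by
  have hcoord (y : EuclideanSpace ℝ ι) (i : ι) : |y i| ≤ ‖y‖ := by
    simpa using PiLp.norm_apply_le y i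
  refine (hg.bdd_mul (c := 1) (f := fun y => y k * y l / ‖y‖ ^ 2)
    (by fun_prop : Measurable _).aestronglyMeasurable
    (.of_forall fun y => ?_)).congr (.of_forall fun y => ?_)
  · rw [Real.norm_eq_abs, abs_div, abs_mul, abs_of_nonneg (by positivity : (0 : ℝ) ≤ ‖y‖ ^ 2)]
    refine div_le_one_of_le₀ ?_ (by positivity)
    rw [sq]
    exact mul_le_mul (hcoord y k) (hcoord y l) (abs_nonneg _) (norm_nonneg _)
  · rcases eq_or_ne y 0 with rfl | hy
    · simp
    · simp only
      field_simp

variable [DecidableEq ι]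

theorem integral_radial_mul_coord_mul_coord_of_ne {k l : ι} (hkl : k ≠ l) :
    ∫ y : EuclideanSpace ℝ ι, g (‖y‖ ^ 2) * (y k * y l) = 0 := by
  let R := LinearIsometryEquiv.piLpCongrRight 2 fun i : ι =>
    if i = k then LinearIsometryEquiv.neg ℝ (E := ℝ) else LinearIsometryEquiv.refl ℝ ℝ
  have hRk (y : EuclideanSpace ℝ ι) : R y k = -y k := by simp [R]
  have hRl (y : EuclideanSpace ℝ ι) : R y l = y l := by simp [R, hkl.symm]
  have h := R.measurePreserving.integral_comp R.toHomeomorph.measurableEmbedding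
    fun y : EuclideanSpace ℝ ι => g (‖y‖ ^ 2) * (y k * y l)
  simp only [LinearIsometryEquiv.norm_map, hRk, hRl, neg_mul, mul_neg, integral_neg] at h
  linarith

theorem integral_radial_mul_coord_mul_self_eq (k l : ι) :
    ∫ y : EuclideanSpace ℝ ι, g (‖y‖ ^ 2) * (y k * y k)
      = ∫ y : EuclideanSpace ℝ ι, g (‖y‖ ^ 2) * (y l * y l) := by
  let S := LinearIsometryEquiv.piLpCongrLeft 2 ℝ ℝ (Equiv.swap k l)
  have hS (y : EuclideanSpace ℝ ι) : S y k = y l := by simp [S]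
  have h := S.measurePreserving.integral_comp S.toHomeomorph.measurableEmbedding
    fun y : EuclideanSpace ℝ ι => g (‖y‖ ^ 2) * (y k * y k)
  simpa only [LinearIsometryEquiv.coe_toHomeomorph, LinearIsometryEquiv.norm_map, hS] using h.symm

theorem card_mul_integral_radial_mul_coord_mul_coord
    (hg : Integrable fun y : EuclideanSpace ℝ ι => g (‖y‖ ^ 2) * ‖y‖ ^ 2) (k l : ι) :
    (Fintype.card ι : ℝ) * ∫ y : EuclideanSpace ℝ ι, g (‖y‖ ^ 2) * (y k * y l)
      = (1 : Matrix ι ι ℝ) k l * ∫ y : EuclideanSpace ℝ ι, g (‖y‖ ^ 2) * ‖y‖ ^ 2 := by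
  rcases eq_or_ne k l with rfl | hkl
  · have hsum (y : EuclideanSpace ℝ ι) :
        g (‖y‖ ^ 2) * ‖y‖ ^ 2 = ∑ m, g (‖y‖ ^ 2) * (y m * y m) := by
      conv_lhs => arg 2; rw [EuclideanSpace.real_norm_sq_eq]
      rw [mul_sum]
      exact sum_congr rfl fun m _ => by ring
    simp_rw [hsum]
    rw [integral_finsetSum _ fun m _ => integrable_radial_mul_coord_mul_coord g hg m m,
      sum_congr rfl fun m _ => integral_radial_mul_coord_mul_self_eq g m k]
    simp
  · simp [one_apply_ne hkl, integral_radial_mul_coord_mul_coord_of_ne g hkl]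

theorem card_mul_integral_radial_mul_mulVec_mul_mulVec
    (hg : Integrable fun y : EuclideanSpace ℝ ι => g (‖y‖ ^ 2) * ‖y‖ ^ 2) (L : Matrix ι ι ℝ)
    (i j : ι) :
    (Fintype.card ι : ℝ) *
        ∫ y : EuclideanSpace ℝ ι, g (‖y‖ ^ 2) * ((L *ᵥ y.ofLp) i * (L *ᵥ y.ofLp) j)
      = (L * Lᵀ) i j * ∫ y : EuclideanSpace ℝ ι, g (‖y‖ ^ 2) * ‖y‖ ^ 2 := by
  have hexpand (y : EuclideanSpace ℝ ι) : g (‖y‖ ^ 2) * ((L *ᵥ y.ofLp) i * (L *ᵥ y.ofLp) j)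
      = ∑ k, ∑ l, L i k * L j l * (g (‖y‖ ^ 2) * (y k * y l)) := by
    simp only [mulVec, dotProduct]
    rw [sum_mul_sum, mul_sum]
    refine sum_congr rfl fun k _ => ?_
    rw [mul_sum]
    exact sum_congr rfl fun l _ => by ring
  have hint (k l : ι) :=
    (integrable_radial_mul_coord_mul_coord g hg k l).const_mul (L i k * L j l)
  simp_rw [hexpand]
  rw [integral_finsetSum _ fun k _ => integrable_finsetSum _ fun l _ => hint k l]
  simp_rw [integral_finsetSum _ fun l _ => hint _ l, integral_const_mul, mul_sum,
    mul_left_comm (Fintype.card ι : ℝ), card_mul_integral_radial_mul_coord_mul_coord g hg]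
  simp [Matrix.mul_apply, one_apply, sum_mul]

end Radial

section Elliptical

variable {p : ℕ} {μ : EuclideanSpace ℝ (Fin p)} {L : Matrix (Fin p) (Fin p) ℝ}

theorem integral_mul_elliptical (hL : IsUnit L.det) (ψ : ℝ → ℝ)
    (H : EuclideanSpace ℝ (Fin p) → ℝ) :
    ∫ x, H x * ((√(L * Lᵀ).det)⁻¹ * ψ (mahal x μ (L * Lᵀ)))
      = ∫ y, H (μ + toLpLin 2 2 L y) * ψ (‖y‖ ^ 2) := by
  have hdet : LinearMap.det (toLpLin 2 2 L) ≠ 0 := by simpa using hL.ne_zero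
  have habs : |L.det| ≠ 0 := abs_ne_zero.2 hL.ne_zero
  set G := fun x => H x * ((√(L * Lᵀ).det)⁻¹ * ψ (mahal x μ (L * Lᵀ)))
  have hcov := integral_comp_const_add_linearMap volume hdet μ G
  rw [LinearMap.det_toLpLin, abs_inv, smul_eq_mul] at hcov
  calc ∫ x, G x = |L.det| * ∫ y, G (μ + toLpLin 2 2 L y) := by
        rw [hcov, mul_inv_cancel_left₀ habs]
    _ = ∫ y, H (μ + toLpLin 2 2 L y) * ψ (‖y‖ ^ 2) := by
      rw [← integral_const_mul]
      congr 1 with y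
      simp only [G, mahal_add_toLpLin_mul_transpose _ _ hL, sqrt_det_mul_transpose]
      field_simp

theorem integrable_mul_elliptical_iff (hL : IsUnit L.det) (ψ : ℝ → ℝ)
    (H : EuclideanSpace ℝ (Fin p) → ℝ) :
    Integrable (fun x => H x * ((√(L * Lᵀ).det)⁻¹ * ψ (mahal x μ (L * Lᵀ))))
      ↔ Integrable (fun y => H (μ + toLpLin 2 2 L y) * ψ (‖y‖ ^ 2)) := by
  have hdet : LinearMap.det (toLpLin 2 2 L) ≠ 0 := by simpa using hL.ne_zero
  rw [← integrable_comp_const_add_linearMap_iff volume hdet μ]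
  simp only [mahal_add_toLpLin_mul_transpose _ _ hL, sqrt_det_mul_transpose, mul_left_comm (H _)]
  exact integrable_const_mul_iff (isUnit_iff_ne_zero.2 (by simpa using hL.ne_zero)) _

theorem card_mul_integral_mul_coord_mul_coord_elliptical {V : Matrix (Fin p) (Fin p) ℝ}
    (hV : V.PosDef) (u ψ : ℝ → ℝ)
    (hint : Integrable fun x =>
      u (mahal x μ V) * (1 + ‖x - μ‖ ^ 2) * ((√V.det)⁻¹ * ψ (mahal x μ V)))
    (i j : Fin p) :
    (p : ℝ) * ∫ x, u (mahal x μ V) * ((x i - μ i) * (x j - μ j)) * ((√V.det)⁻¹ * ψ (mahal x μ V))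
      = V i j * ∫ x, u (mahal x μ V) * mahal x μ V * ((√V.det)⁻¹ * ψ (mahal x μ V)) := by
  obtain ⟨L, rfl, hL⟩ := hV.exists_eq_mul_transpose
  set g : ℝ → ℝ := fun t => u t * ψ t
  have hg : Integrable fun y : EuclideanSpace ℝ (Fin p) => g (‖y‖ ^ 2) * ‖y‖ ^ 2 := by
    refine Integrable.mul_norm_sq_of_mul_one_add_norm_sq (T := toLpLin 2 2 L)
      (by simpa using hL.ne_zero)
      (((integrable_mul_elliptical_iff hL ψ _).1 hint).congr (.of_forall fun y => ?_))
    simp only [mahal_add_toLpLin_mul_transpose _ _ hL, add_sub_cancel_left, g]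
    ring
  have hmom := card_mul_integral_radial_mul_mulVec_mul_mulVec g hg L i j
  rw [Fintype.card_fin] at hmom
  rw [integral_mul_elliptical hL, integral_mul_elliptical hL]
  convert hmom using 3 <;> congr 1 with y <;>
    simp only [mahal_add_toLpLin_mul_transpose _ _ hL, PiLp.add_apply, ofLp_toLpLin, toLin'_apply,
      add_sub_cancel_left, g] <;> ring

end Elliptical

theorem elliptical_solves_estimating_equations_general
    {p : ℕ}
    (μ0 : EuclideanSpace ℝ (Fin p)) (V0 : Matrix (Fin p) (Fin p) ℝ)
    (hV0 : V0.PosDef)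
    (ψ : ℝ → ℝ)
    (f : EuclideanSpace ℝ (Fin p) → ℝ)
    (hf : ∀ x, f x = (Real.sqrt V0.det)⁻¹ * ψ (mahal x μ0 V0))
    (w : ℝ → ℝ)
    (a : ℝ) (ha : 0 < a)
    (hint : Integrable
      (fun x => w (mahal x μ0 (a • V0)) * (1 + ‖x - μ0‖ ^ 2) * f x)) :
    (∫ x, (w (mahal x μ0 (a • V0)) * f x) • (x - μ0) = 0) ∧
    (∀ i j : Fin p,
      (p : ℝ) * ∫ x, w (mahal x μ0 (a • V0)) * ((x i - μ0 i) * (x j - μ0 j)) * f x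
        = (∫ x, w (mahal x μ0 (a • V0)) * mahal x μ0 (a • V0) * f x) * (a • V0) i j) := by
  have hV0det : IsUnit V0.det := isUnit_iff_ne_zero.2 hV0.det_pos.ne'
  simp only [hf, mahal_smul _ _ hV0det ha.ne'] at hint ⊢
  refine ⟨integral_mahal_smul_sub_eq_zero μ0 V0 fun t => w (a⁻¹ * t) * ((√V0.det)⁻¹ * ψ t),
    fun i j => ?_⟩
  rw [card_mul_integral_mul_coord_mul_coord_elliptical hV0 (fun t => w (a⁻¹ * t)) ψ hint i j,
    Matrix.smul_apply, smul_eq_mul]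
  simp_rw [mul_left_comm _ a⁻¹ (mahal _ _ _), mul_assoc a⁻¹, integral_const_mul]
  field_simp

/-- Theorem 2(a): solution set of the semiparametric estimating
equations.  For an elliptical density `f` with parameters `(μ0, V0)`, any
nonnegative measurable weight `w` and any `a > 0` with
`∫ w(d(x,μ0,aV0)) (1 + ‖x−μ0‖²) f(x) dx < ∞`, the pair `(μ, V) = (μ0, a V0)`
solves `∫ w(d(x,μ,V)) (x−μ) f(x) dx = 0` and
`p ∫ w(d(x,μ,V)) (x−μ)(x−μ)ᵀ f(x) dx = (∫ w(d(x,μ,V)) d(x,μ,V) f(x) dx) · V`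
(the matrix equation being read entrywise). -/
theorem elliptical_solves_estimating_equations
    {p : ℕ} (hp : 1 ≤ p)
    (μ0 : EuclideanSpace ℝ (Fin p)) (V0 : Matrix (Fin p) (Fin p) ℝ)
    (hV0sym : V0.IsSymm) (hV0 : V0.PosDef)
    (ψ : ℝ → ℝ) (hψmeas : Measurable ψ) (hψpos : ∀ u, 0 ≤ u → 0 < ψ u)
    (f : EuclideanSpace ℝ (Fin p) → ℝ)
    (hf : ∀ x, f x = (Real.sqrt V0.det)⁻¹ * ψ (mahal x μ0 V0))
    (hf1 : ∫ x, f x = 1)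
    (w : ℝ → ℝ) (hwmeas : Measurable w) (hw0 : ∀ u, 0 ≤ u → 0 ≤ w u)
    (a : ℝ) (ha : 0 < a)
    (hint : Integrable
      (fun x => w (mahal x μ0 (a • V0)) * (1 + ‖x - μ0‖ ^ 2) * f x)) :
    (∫ x, (w (mahal x μ0 (a • V0)) * f x) • (x - μ0) = 0) ∧
    (∀ i j : Fin p,
      (p : ℝ) * ∫ x, w (mahal x μ0 (a • V0)) * ((x i - μ0 i) * (x j - μ0 j)) * f x
        = (∫ x, w (mahal x μ0 (a • V0)) * mahal x μ0 (a • V0) * f x) * (a • V0) i j) :=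
  elliptical_solves_estimating_equations_general μ0 V0 hV0 ψ f hf w a ha hint
end

section
/- (Key step for the scaling effect of the fixed-point iteration, Theorem on scaling.) Let Q be a probability measure on ℝ^p, μ ∈ ℝ^p, V a symmetric positive definite p×p matrix, and w : [0,∞) → [0,∞) measurable, such that 0 < ∫ w(d(x,μ,V)) d(x,μ,V) dQ(x) < ∞ and ∫ w(d(x,μ,V)) ‖x−μ‖² dQ(x) < ∞. Define the one-step update M = p · ( ∫ w(d(x,μ,V)) (x−μ)(x−μ)ᵀ dQ(x) ) / ( ∫ w(d(x,μ,V)) d(x,μ,V) dQ(x) ). Then M is symmetric positive semidefinite, trace(V⁻¹ M) = p, and det(M) ≤ det(V), with equality det(M) = det(V) if and only if M = V. -/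
/-!
`M` is `p / c` times the weighted scatter matrix `S = ∫ w(d) (x−μ)(x−μ)ᵀ dQ`, where
`c = ∫ w(d) d dQ`. `S` is positive semidefinite because `vᵀ S v = ∫ w(d) (vᵀ(x−μ))² dQ`, and
`tr (V⁻¹ S) = c`, so `tr (V⁻¹ M) = p`. The matrix `A = V^(-1/2) M V^(-1/2)` is then positive
semidefinite with trace `p` and `det M = det A · det V`. Its eigenvalues `λᵢ ≥ 0` sum to `p`, so
`λ ≤ exp (λ − 1)` gives `det A = ∏ λᵢ ≤ exp (∑ (λᵢ − 1)) = 1`, with equality only if every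
`λᵢ = 1`, that is `A = 1`, that is `M = V`.
-/

open MeasureTheory Matrix Finset

noncomputable def weightedScatter {n : Type*} (Q : Measure (EuclideanSpace ℝ n))
    (ω : EuclideanSpace ℝ n → ℝ) (μ : EuclideanSpace ℝ n) : Matrix n n ℝ :=
  of fun i j => ∫ x, ω x * ((x i - μ i) * (x j - μ j)) ∂Q

theorem weightedScatter_apply_comm {n : Type*} (Q : Measure (EuclideanSpace ℝ n))
    (ω : EuclideanSpace ℝ n → ℝ) (μ : EuclideanSpace ℝ n) (i j : n) :
    weightedScatter Q ω μ i j = weightedScatter Q ω μ j i := by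
  simp only [weightedScatter, of_apply, mul_comm (_ - μ i)]

section weightedScatter

variable {n : Type*} [Fintype n] {Q : Measure (EuclideanSpace ℝ n)}
  {ω : EuclideanSpace ℝ n → ℝ} {μ : EuclideanSpace ℝ n}

theorem integrable_mul_sub_mul_sub (hω : AEStronglyMeasurable ω Q)
    (h : Integrable (fun x => ω x * ‖x - μ‖ ^ 2) Q) (i j : n) :
    Integrable (fun x => ω x * ((x i - μ i) * (x j - μ j))) Q := by
  refine h.mono (hω.mul (by fun_prop)) (ae_of_all _ fun x => ?_)
  have hcoord (k : n) : ‖x k - μ k‖ ≤ ‖x - μ‖ := PiLp.norm_apply_le (x - μ) k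
  simp only [norm_mul, norm_norm, sq]
  gcongr <;> apply hcoord

theorem sum_sum_mul_weightedScatter
    (hint : ∀ i j : n, Integrable (fun x => ω x * ((x i - μ i) * (x j - μ j))) Q)
    (A : Matrix n n ℝ) :
    ∑ i, ∑ j, A i j * weightedScatter Q ω μ i j =
      ∫ x, ω x * ∑ i, ∑ j, (x i - μ i) * A i j * (x j - μ j) ∂Q := by
  have hpt (x : EuclideanSpace ℝ n) : ω x * ∑ i, ∑ j, (x i - μ i) * A i j * (x j - μ j) =
      ∑ i, ∑ j, A i j * (ω x * ((x i - μ i) * (x j - μ j))) := by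
    simp only [mul_sum]
    exact sum_congr rfl fun i _ => sum_congr rfl fun j _ => by ring
  simp only [hpt, weightedScatter, of_apply, ← integral_const_mul]
  calc _ = ∑ i, ∫ x, ∑ j, A i j * (ω x * ((x i - μ i) * (x j - μ j))) ∂Q :=
        sum_congr rfl fun i _ => (integral_finsetSum _ fun j _ => (hint i j).const_mul _).symm
    _ = _ := (integral_finsetSum _ fun i _ =>
        integrable_finsetSum _ fun j _ => (hint i j).const_mul _).symm

theorem weightedScatter_posSemidef (hω : ∀ x, 0 ≤ ω x)
    (hint : ∀ i j : n, Integrable (fun x => ω x * ((x i - μ i) * (x j - μ j))) Q) :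
    (weightedScatter Q ω μ).PosSemidef := by
  refine .of_dotProduct_mulVec_nonneg
    (ext fun i j => by simp [weightedScatter_apply_comm Q ω μ i j]) fun v => ?_
  have hquad : star v ⬝ᵥ weightedScatter Q ω μ *ᵥ v =
      ∑ i, ∑ j, vecMulVec v v i j * weightedScatter Q ω μ i j := by
    simp only [star_trivial, dotProduct, mulVec, vecMulVec_apply, mul_sum]
    exact sum_congr rfl fun i _ => sum_congr rfl fun j _ => by ring
  have hsq (x : EuclideanSpace ℝ n) : ∑ i, ∑ j, (x i - μ i) * vecMulVec v v i j * (x j - μ j) =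
      (∑ i, v i * (x i - μ i)) ^ 2 := by
    simp only [sq, sum_mul_sum, vecMulVec_apply]
    exact sum_congr rfl fun i _ => sum_congr rfl fun j _ => by ring
  rw [hquad, sum_sum_mul_weightedScatter hint]
  exact integral_nonneg fun x => mul_nonneg (hω x) (hsq x ▸ sq_nonneg _)

theorem trace_mul_weightedScatter
    (hint : ∀ i j : n, Integrable (fun x => ω x * ((x i - μ i) * (x j - μ j))) Q)
    (A : Matrix n n ℝ) :
    (A * weightedScatter Q ω μ).trace =
      ∫ x, ω x * ∑ i, ∑ j, (x i - μ i) * A i j * (x j - μ j) ∂Q := by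
  rw [← sum_sum_mul_weightedScatter hint]
  exact sum_congr rfl fun i _ => sum_congr rfl fun j _ =>
    congrArg (A i j * ·) (weightedScatter_apply_comm Q ω μ j i)

end weightedScatter

theorem Real.prod_le_one_of_sum_eq_card {ι : Type*} [Fintype ι] {f : ι → ℝ}
    (hf : ∀ i, 0 ≤ f i) (hsum : ∑ i, f i = Fintype.card ι) :
    ∏ i, f i ≤ 1 ∧ (∏ i, f i = 1 ↔ ∀ i, f i = 1) := by
  have hexp : ∏ i, Real.exp (f i - 1) = 1 := by
    simp [← Real.exp_sum, Finset.sum_sub_distrib, hsum]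
  have hle : ∀ i, f i ≤ Real.exp (f i - 1) := fun i => by
    linarith [Real.add_one_le_exp (f i - 1)]
  refine ⟨hexp ▸ prod_le_prod (fun i _ => hf i) (fun i _ => hle i), fun h1 => ?_,
    fun h => by simp [h]⟩
  by_contra! ⟨i, hi⟩
  have hpos : ∀ j, 0 < f j := fun j =>
    (hf j).lt_of_ne fun h0 => by simp [prod_eq_zero (mem_univ j) h0.symm] at h1
  have hlt : f i < Real.exp (f i - 1) := by
    linarith [Real.add_one_lt_exp (x := f i - 1) (by intro h; apply hi; linarith)]
  have := prod_lt_prod (fun j _ => hpos j) (fun j _ => hle j) ⟨i, mem_univ i, hlt⟩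
  rw [h1, hexp] at this
  exact this.false

theorem Matrix.PosSemidef.det_le_one_of_trace_eq_card {n : Type*} [Fintype n] [DecidableEq n]
    {A : Matrix n n ℝ} (hA : A.PosSemidef) (htr : A.trace = Fintype.card n) :
    A.det ≤ 1 ∧ (A.det = 1 ↔ A = 1) := by
  have hdet : A.det = ∏ i, hA.isHermitian.eigenvalues i := by
    simpa using hA.isHermitian.det_eq_prod_eigenvalues
  have hsum : ∑ i, hA.isHermitian.eigenvalues i = Fintype.card n := by
    simpa [htr] using hA.isHermitian.trace_eq_sum_eigenvalues.symm
  obtain ⟨hle, heq⟩ := Real.prod_le_one_of_sum_eq_card hA.eigenvalues_nonneg hsum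
  refine ⟨hdet ▸ hle, ⟨fun h1 => ?_, fun h => by simp [h]⟩⟩
  have heig := heq.1 (hdet ▸ h1)
  refine CFC.eq_one_of_spectrum_subset_one (R := ℝ) A ?_ hA.isHermitian.isSelfAdjoint
  rw [hA.isHermitian.spectrum_real_eq_range_eigenvalues]
  rintro _ ⟨i, rfl⟩
  exact heig i

open scoped MatrixOrder in
theorem Matrix.PosDef.det_le_of_trace_inv_mul_eq_card {n : Type*} [Fintype n] [DecidableEq n]
    {V M : Matrix n n ℝ} (hV : V.PosDef) (hM : M.PosSemidef)
    (htr : (V⁻¹ * M).trace = Fintype.card n) :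
    M.det ≤ V.det ∧ (M.det = V.det ↔ M = V) := by
  set S := CFC.sqrt V
  have hSS : S * S = V := CFC.sqrt_mul_sqrt_self V hV.posSemidef.nonneg
  have hSH : S.IsHermitian := (CFC.sqrt_nonneg V).posSemidef.isHermitian
  have hSdet : IsUnit S.det := by
    refine isUnit_iff_ne_zero.2 fun h => hV.det_pos.ne' ?_
    rw [← hSS, det_mul, h, zero_mul]
  set A := S⁻¹ * M * S⁻¹
  have hA : A.PosSemidef := by
    simpa only [hSH.inv.eq] using hM.mul_mul_conjTranspose_same S⁻¹
  have hMA : M = S * A * S := by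
    simp only [A, ← mul_assoc, mul_nonsing_inv S hSdet, one_mul]
    rw [mul_assoc, nonsing_inv_mul S hSdet, mul_one]
  have htrA : A.trace = Fintype.card n := by
    rw [trace_mul_cycle, ← mul_inv_rev, hSS, htr]
  have hdet : M.det = A.det * V.det := by
    rw [hMA, ← hSS]; simp only [det_mul]; ring
  obtain ⟨hle, heq⟩ := hA.det_le_one_of_trace_eq_card htrA
  have hVpos := hV.det_pos
  refine ⟨by rw [hdet]; nlinarith, ?_⟩
  rw [hdet, mul_eq_right₀ hVpos.ne', heq, hMA, ← hSS]
  have hS : IsUnit S := (isUnit_iff_isUnit_det S).2 hSdet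
  exact ⟨fun h => by rw [h, mul_one], fun h =>
    hS.mul_left_cancel <| hS.mul_right_cancel <| by rwa [mul_one]⟩

theorem continuous_mahal {p : ℕ} (μ : EuclideanSpace ℝ (Fin p)) (V : Matrix (Fin p) (Fin p) ℝ) :
    Continuous fun x => mahal x μ V := by
  unfold mahal; fun_prop

theorem mahal_nonneg {p : ℕ} {V : Matrix (Fin p) (Fin p) ℝ} (hV : V.PosDef)
    (x μ : EuclideanSpace ℝ (Fin p)) : 0 ≤ mahal x μ V := by
  simpa [mahal, dotProduct, mulVec, mul_sum, mul_assoc] using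
    hV.inv.posSemidef.dotProduct_mulVec_nonneg (fun i => x i - μ i)

theorem fixed_point_update_det_le_general
    {p : ℕ}
    (Q : Measure (EuclideanSpace ℝ (Fin p)))
    (μ : EuclideanSpace ℝ (Fin p)) (V : Matrix (Fin p) (Fin p) ℝ)
    (hV : V.PosDef)
    (w : ℝ → ℝ) (hwmeas : Measurable w) (hw0 : ∀ u, 0 ≤ u → 0 ≤ w u)
    (hden : 0 < ∫ x, w (mahal x μ V) * mahal x μ V ∂Q)
    (hint2 : Integrable (fun x => w (mahal x μ V) * ‖x - μ‖ ^ 2) Q)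
    (M : Matrix (Fin p) (Fin p) ℝ)
    (hM : ∀ i j : Fin p, M i j =
      (p : ℝ) * (∫ x, w (mahal x μ V) * ((x i - μ i) * (x j - μ j)) ∂Q) /
        (∫ x, w (mahal x μ V) * mahal x μ V ∂Q)) :
    M.PosSemidef ∧ Matrix.trace (V⁻¹ * M) = (p : ℝ) ∧ M.det ≤ V.det ∧
      (M.det = V.det ↔ M = V) := by
  set c := ∫ x, w (mahal x μ V) * mahal x μ V ∂Q
  set S := weightedScatter Q (fun x => w (mahal x μ V)) μ
  have hint : ∀ i j, Integrable (fun x => w (mahal x μ V) * ((x i - μ i) * (x j - μ j))) Q :=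
    integrable_mul_sub_mul_sub
      (hwmeas.comp (continuous_mahal μ V).measurable).aestronglyMeasurable hint2
  have hMS : M = (p / c) • S := by
    ext i j
    rw [hM, Matrix.smul_apply, smul_eq_mul, div_mul_eq_mul_div]
    rfl
  have hMpsd : M.PosSemidef := hMS ▸
    (weightedScatter_posSemidef (fun x => hw0 _ (mahal_nonneg hV x μ)) hint).smul (by positivity)
  have htr : (V⁻¹ * M).trace = p := by
    rw [hMS, mul_smul_comm, trace_smul, trace_mul_weightedScatter hint, smul_eq_mul]
    exact div_mul_cancel₀ _ hden.ne'
  exact ⟨hMpsd, htr, hV.det_le_of_trace_inv_mul_eq_card hMpsd (by simpa using htr)⟩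

/-- key step for the scaling effect of the fixed-point
iteration.  For a probability measure `Q`, a symmetric positive definite `V`,
and a nonnegative measurable weight `w` with
`0 < ∫ w(d(x,μ,V)) d(x,μ,V) dQ < ∞` and `∫ w(d(x,μ,V)) ‖x−μ‖² dQ < ∞`, the
one-step update
`M = p (∫ w(d(x,μ,V)) (x−μ)(x−μ)ᵀ dQ) / (∫ w(d(x,μ,V)) d(x,μ,V) dQ)`
is symmetric positive semidefinite, satisfies `trace(V⁻¹ M) = p`, and
`det M ≤ det V`, with equality iff `M = V`. -/
theorem fixed_point_update_det_le
    {p : ℕ} (hp : 1 ≤ p)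
    (Q : Measure (EuclideanSpace ℝ (Fin p))) (hQ : IsProbabilityMeasure Q)
    (μ : EuclideanSpace ℝ (Fin p)) (V : Matrix (Fin p) (Fin p) ℝ)
    (hVsym : V.IsSymm) (hV : V.PosDef)
    (w : ℝ → ℝ) (hwmeas : Measurable w) (hw0 : ∀ u, 0 ≤ u → 0 ≤ w u)
    (hint1 : Integrable (fun x => w (mahal x μ V) * mahal x μ V) Q)
    (hden : 0 < ∫ x, w (mahal x μ V) * mahal x μ V ∂Q)
    (hint2 : Integrable (fun x => w (mahal x μ V) * ‖x - μ‖ ^ 2) Q)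
    (M : Matrix (Fin p) (Fin p) ℝ)
    (hM : ∀ i j : Fin p, M i j =
      (p : ℝ) * (∫ x, w (mahal x μ V) * ((x i - μ i) * (x j - μ j)) ∂Q) /
        (∫ x, w (mahal x μ V) * mahal x μ V ∂Q)) :
    M.PosSemidef ∧ Matrix.trace (V⁻¹ * M) = (p : ℝ) ∧ M.det ≤ V.det ∧
      (M.det = V.det ↔ M = V) :=
  fixed_point_update_det_le_general Q μ V hV w hwmeas hw0 hden hint2 M hM
end

section
/- (Boundedness of the eigenvector influence function, Theorem 4.) Let V be a symmetric positive definite p×p real matrix with spectral decomposition V = Σ_{i=1}^p λ_i γ_i γ_iᵀ, where λ_1 > λ_2 > ⋯ > λ_p > 0 are distinct and (γ_1,…,γ_p) is an orthonormal basis of ℝ^p. Fix j ∈ {1,…,p}, μ0 ∈ ℝ^p, and a measurable w : [0,∞) → [0,∞). For x ∈ ℝ^p define the eigenvector influence direction IF_j(x) = w(d(x,μ0,V)) · (γ_jᵀ(x−μ0)) · Σ_{i≠j} ( (γ_iᵀ(x−μ0)) / (λ_j − λ_i) ) γ_i. Then there exists a constant C > 0 depending only on V (one may take C = λ_1 / min_{i≠j}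 |λ_j − λ_i|) such that for all x ∈ ℝ^p, ‖IF_j(x)‖ ≤ C · w(d(x,μ0,V)) · d(x,μ0,V), i.e., the influence function is of order O(h(d(x,μ0,V))) where h(u) = u·w(u). -/
/-!
Write `z i = γ iᵀ (x - μ0)`. Since `V⁻¹ = Σ λ_i⁻¹ γ_i γ_iᵀ`, the Mahalanobis distance is
`d = Σ z_i² / λ_i`, so `‖z‖² ≤ λ_max d`. By orthonormality of the `γ i`, the vector
`Σ_{i ≠ j} z_i / (λ_j - λ_i) • γ_i` has norm at most `K ‖z‖`, where `K` bounds every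
`|λ_j - λ_i|⁻¹`, and `|z_j| ≤ ‖z‖`. Hence `‖IF_j(x)‖ ≤ K w(d) ‖z‖² ≤ K λ_max w(d) d`.
-/

open MeasureTheory Matrix Finset

namespace Matrix

variable {n K : Type*} [Fintype n] [DecidableEq n]

theorem inv_transpose_mul_diagonal_mul [Field K] {Γ : Matrix n n K} (hΓ : Γ * Γᵀ = 1)
    {d : n → K} (hd : ∀ i, d i ≠ 0) :
    (Γᵀ * diagonal d * Γ)⁻¹ = Γᵀ * diagonal d⁻¹ * Γ := by
  refine inv_eq_right_inv ?_
  have hdd : diagonal d * diagonal d⁻¹ = 1 := by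
    rw [diagonal_mul_diagonal, ← diagonal_one]
    exact congrArg diagonal (funext fun i => mul_inv_cancel₀ (hd i))
  calc Γᵀ * diagonal d * Γ * (Γᵀ * diagonal d⁻¹ * Γ)
      = Γᵀ * (diagonal d * (Γ * Γᵀ) * diagonal d⁻¹) * Γ := by simp only [Matrix.mul_assoc]
    _ = 1 := by rw [hΓ, Matrix.mul_one, hdd, Matrix.mul_one, mul_eq_one_comm.mp hΓ]

theorem dotProduct_transpose_mul_diagonal_mul_mulVec [CommSemiring K] (Γ : Matrix n n K)
    (d y : n → K) :
    y ⬝ᵥ (Γᵀ * diagonal d * Γ) *ᵥ y = ∑ i, d i * (Γ *ᵥ y) i ^ 2 := by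
  rw [← mulVec_mulVec, ← mulVec_mulVec, dotProduct_mulVec, vecMul_transpose]
  simp only [dotProduct, mulVec_diagonal, sq]
  exact sum_congr rfl fun i _ => by ring

end Matrix

theorem Orthonormal.norm_sq_sum_smul {ι E : Type*} [NormedAddCommGroup E] [InnerProductSpace ℝ E]
    {v : ι → E} (hv : Orthonormal ℝ v) (s : Finset ι) (c : ι → ℝ) :
    ‖∑ i ∈ s, c i • v i‖ ^ 2 = ∑ i ∈ s, c i ^ 2 := by
  classical
  rw [← real_inner_self_eq_norm_sq, hv.inner_sum]
  simp [sq]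

theorem Orthonormal.norm_sum_div_smul_le {ι E : Type*} [Fintype ι] [NormedAddCommGroup E]
    [InnerProductSpace ℝ E] {v : ι → E} (hv : Orthonormal ℝ v) (s : Finset ι) (z g : ι → ℝ)
    {K : ℝ} (hK0 : 0 ≤ K) (hK : ∀ i ∈ s, |g i|⁻¹ ≤ K) :
    ‖∑ i ∈ s, (z i / g i) • v i‖ ≤ K * √(∑ i, z i ^ 2) := by
  have hsq : ‖∑ i ∈ s, (z i / g i) • v i‖ ^ 2 ≤ (K * √(∑ i, z i ^ 2)) ^ 2 := by
    rw [hv.norm_sq_sum_smul, mul_pow, Real.sq_sqrt (by positivity), mul_sum]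
    calc ∑ i ∈ s, (z i / g i) ^ 2 ≤ ∑ i ∈ s, K ^ 2 * z i ^ 2 := by
          refine sum_le_sum fun i hi => ?_
          rw [div_eq_mul_inv, mul_pow, mul_comm, ← sq_abs (g i)⁻¹, abs_inv]
          gcongr
          exact hK i hi
      _ ≤ ∑ i, K ^ 2 * z i ^ 2 :=
          sum_le_sum_of_subset_of_nonneg (subset_univ s) fun i _ _ => by positivity
  exact (pow_le_pow_iff_left₀ (norm_nonneg _) (by positivity) two_ne_zero).1 hsq

theorem EuclideanSpace.orthonormal_of_sum_mul_eq_ite {ι n : Type*} [Fintype n] [DecidableEq ι]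
    {v : ι → EuclideanSpace ℝ n} (h : ∀ i i', ∑ k, v i k * v i' k = if i = i' then 1 else 0) :
    Orthonormal ℝ v := by
  rw [orthonormal_iff_ite]
  intro i i'
  simpa [PiLp.inner_apply, mul_comm] using h i i'

theorem sum_sq_le_mul_sum_inv_mul_sq {ι : Type*} (s : Finset ι) {lam : ι → ℝ} {L : ℝ}
    (hlam : ∀ i ∈ s, 0 < lam i) (hL : ∀ i ∈ s, lam i ≤ L) (z : ι → ℝ) :
    ∑ i ∈ s, z i ^ 2 ≤ L * ∑ i ∈ s, (lam i)⁻¹ * z i ^ 2 := by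
  rw [mul_sum]
  refine sum_le_sum fun i hi => ?_
  calc z i ^ 2 = lam i * ((lam i)⁻¹ * z i ^ 2) := by field_simp [(hlam i hi).ne']
    _ ≤ L * ((lam i)⁻¹ * z i ^ 2) := by
      have := hlam i hi
      gcongr
      exact hL i hi

theorem mahal_eq_dotProduct_inv_mulVec {p : ℕ} (x μ : EuclideanSpace ℝ (Fin p))
    (V : Matrix (Fin p) (Fin p) ℝ) :
    mahal x μ V = (x - μ).ofLp ⬝ᵥ V⁻¹ *ᵥ (x - μ).ofLp := by
  simp only [mahal, dotProduct, mulVec, mul_sum, WithLp.ofLp_sub, Pi.sub_apply, mul_assoc]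

theorem mahal_eq_sum_inv_mul_sq {p : ℕ} {V : Matrix (Fin p) (Fin p) ℝ} {lam : Fin p → ℝ}
    {γ : Fin p → EuclideanSpace ℝ (Fin p)} (hlam_pos : ∀ i, 0 < lam i)
    (horth : ∀ i i' : Fin p, (∑ k, γ i k * γ i' k) = if i = i' then 1 else 0)
    (hV : ∀ k m : Fin p, V k m = ∑ i, lam i * γ i k * γ i m) (x μ : EuclideanSpace ℝ (Fin p)) :
    mahal x μ V = ∑ i, (lam i)⁻¹ * (∑ k, γ i k * (x k - μ k)) ^ 2 := by
  set Γ : Matrix (Fin p) (Fin p) ℝ := Matrix.of fun i k => γ i k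
  have hΓ : Γ * Γᵀ = 1 := by
    ext i i'
    simpa [Γ, mul_apply, one_apply] using horth i i'
  have hVΓ : V = Γᵀ * diagonal lam * Γ := by
    ext k m
    simp only [hV, Γ, mul_apply, transpose_apply, of_apply, diagonal_apply, mul_ite, mul_zero,
      sum_ite_eq', mem_univ, if_true]
    exact sum_congr rfl fun i _ => by ring
  rw [mahal_eq_dotProduct_inv_mulVec, hVΓ,
    inv_transpose_mul_diagonal_mul hΓ fun i => (hlam_pos i).ne',
    dotProduct_transpose_mul_diagonal_mul_mulVec]
  rfl

theorem eigenvector_influence_bounded_general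
    {p : ℕ}
    (V : Matrix (Fin p) (Fin p) ℝ)
    (lam : Fin p → ℝ) (γ : Fin p → EuclideanSpace ℝ (Fin p))
    (hlam_pos : ∀ i, 0 < lam i)
    (horth : ∀ i i' : Fin p, (∑ k, γ i k * γ i' k) = if i = i' then 1 else 0)
    (hV : ∀ k m : Fin p, V k m = ∑ i, lam i * γ i k * γ i m)
    (j : Fin p) (μ0 : EuclideanSpace ℝ (Fin p))
    (w : ℝ → ℝ) (hw0 : ∀ u, 0 ≤ u → 0 ≤ w u)
    (IFj : EuclideanSpace ℝ (Fin p) → EuclideanSpace ℝ (Fin p))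
    (hIFj : ∀ x, IFj x =
      (w (mahal x μ0 V) * (∑ k, γ j k * (x k - μ0 k))) •
        ∑ i ∈ Finset.univ.erase j,
          ((∑ k, γ i k * (x k - μ0 k)) / (lam j - lam i)) • γ i) :
    ∃ C : ℝ, 0 < C ∧ ∀ x : EuclideanSpace ℝ (Fin p),
      ‖IFj x‖ ≤ C * w (mahal x μ0 V) * mahal x μ0 V := by
  obtain ⟨L, hL⟩ := Finite.exists_le lam
  obtain ⟨K, hK⟩ := Finite.exists_le fun i => |lam j - lam i|⁻¹
  have hL0 : 0 < L := (hlam_pos j).trans_le (hL j)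
  refine ⟨L * max K 1, by positivity, fun x => ?_⟩
  set z : Fin p → ℝ := fun i => ∑ k, γ i k * (x k - μ0 k)
  set d := mahal x μ0 V
  set S := ∑ i, z i ^ 2
  have hd : d = ∑ i, (lam i)⁻¹ * z i ^ 2 := mahal_eq_sum_inv_mul_sq hlam_pos horth hV x μ0
  have hwd : 0 ≤ w d := hw0 d <| hd ▸ sum_nonneg fun i _ =>
    mul_nonneg (inv_nonneg.2 (hlam_pos i).le) (sq_nonneg (z i))
  have hSd : S ≤ L * d := hd ▸ sum_sq_le_mul_sum_inv_mul_sq univ (fun i _ => hlam_pos i)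
    (fun i _ => hL i) z
  have hS0 : 0 ≤ S := sum_nonneg fun i _ => sq_nonneg (z i)
  have hzj : |z j| ≤ √S :=
    Real.abs_le_sqrt (single_le_sum (fun i _ => sq_nonneg (z i)) (mem_univ j))
  have hT := (EuclideanSpace.orthonormal_of_sum_mul_eq_ite horth).norm_sum_div_smul_le
    (univ.erase j) z (lam j - lam ·) (by positivity) fun i _ => (hK i).trans (le_max_left K 1)
  calc ‖IFj x‖ = w d * |z j| * ‖∑ i ∈ univ.erase j, (z i / (lam j - lam i)) • γ i‖ := by
        rw [hIFj, norm_smul, Real.norm_eq_abs, abs_mul, abs_of_nonneg hwd]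
    _ ≤ w d * √S * (max K 1 * √S) := by gcongr
    _ = max K 1 * w d * S := by rw [mul_mul_mul_comm, Real.mul_self_sqrt hS0]; ring
    _ ≤ max K 1 * w d * (L * d) := by gcongr
    _ = L * max K 1 * w d * d := by ring

/-- boundedness of the eigenvector influence function,
Theorem 4.  Let `V = Σ λ_i γ_i γ_iᵀ` with distinct eigenvalues
`λ_1 > ⋯ > λ_p > 0` and orthonormal eigenvectors `γ_i`.  For the eigenvector
influence direction
`IF_j(x) = w(d(x,μ0,V)) (γ_jᵀ(x−μ0)) Σ_{i≠j} ((γ_iᵀ(x−μ0))/(λ_j−λ_i)) γ_i`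
there is a constant `C > 0` with `‖IF_j(x)‖ ≤ C w(d(x,μ0,V)) d(x,μ0,V)` for
all `x`; i.e. the influence function is `O(h(d(x,μ0,V)))` for `h(u) = u w(u)`. -/
theorem eigenvector_influence_bounded
    {p : ℕ} (hp : 1 ≤ p)
    (V : Matrix (Fin p) (Fin p) ℝ)
    (lam : Fin p → ℝ) (γ : Fin p → EuclideanSpace ℝ (Fin p))
    (hlam_pos : ∀ i, 0 < lam i)
    (hlam_anti : ∀ i i' : Fin p, i < i' → lam i' < lam i)
    (horth : ∀ i i' : Fin p, (∑ k, γ i k * γ i' k) = if i = i' then 1 else 0)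
    (hV : ∀ k m : Fin p, V k m = ∑ i, lam i * γ i k * γ i m)
    (j : Fin p) (μ0 : EuclideanSpace ℝ (Fin p))
    (w : ℝ → ℝ) (hwmeas : Measurable w) (hw0 : ∀ u, 0 ≤ u → 0 ≤ w u)
    (IFj : EuclideanSpace ℝ (Fin p) → EuclideanSpace ℝ (Fin p))
    (hIFj : ∀ x, IFj x =
      (w (mahal x μ0 V) * (∑ k, γ j k * (x k - μ0 k))) •
        ∑ i ∈ Finset.univ.erase j,
          ((∑ k, γ i k * (x k - μ0 k)) / (lam j - lam i)) • γ i) :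
    ∃ C : ℝ, 0 < C ∧ ∀ x : EuclideanSpace ℝ (Fin p),
      ‖IFj x‖ ≤ C * w (mahal x μ0 V) * mahal x μ0 V :=
  eigenvector_influence_bounded_general V lam γ hlam_pos horth hV j μ0 w hw0 IFj hIFj
end

section
/- (Boundedness of the eigenvalue-ratio influence function, Theorem 4.) Let V be a symmetric positive definite p×p real matrix with spectral decomposition V = Σ_{i=1}^p λ_i γ_i γ_iᵀ, where λ_1 > λ_2 > ⋯ > λ_p > 0 are distinct and (γ_1,…,γ_p) is an orthonormal basis of ℝ^p. Fix i ≠ j in {1,…,p}, μ0 ∈ ℝ^p, and a measurable w : [0,∞) → [0,∞). For x ∈ ℝ^p define the eigenvalue-ratio influence value IF_{ij}(x) = w(d(x,μ0,V)) · (λ_j/λ_i) · [ (γ_jᵀ(x−μ0))² / λ_j − (γ_iᵀ(x−μ0))² / λ_i ]. Then for all x ∈ ℝ^p, |IF_{ij}(x)| ≤ (2λ_j/λ_i) · w(d(x,μ0,V)) · d(x,μ0,V), i.e., the influence function is of order O(h(d(x,μ0,V))) where h(u) = u·w(u). -/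
open MeasureTheory Matrix Finset

/-- boundedness of the eigenvalue-ratio influence function,
Theorem 4.  Let `V = Σ λ_i γ_i γ_iᵀ` with distinct eigenvalues
`λ_1 > ⋯ > λ_p > 0` and orthonormal eigenvectors `γ_i`.  For `i ≠ j`, define
`IF_{ij}(x) = w(d(x,μ0,V)) (λ_j/λ_i) [(γ_jᵀ(x−μ0))²/λ_j − (γ_iᵀ(x−μ0))²/λ_i]`.
Then `|IF_{ij}(x)| ≤ (2 λ_j/λ_i) w(d(x,μ0,V)) d(x,μ0,V)` for all `x`; i.e. the
influence function is `O(h(d(x,μ0,V)))` for `h(u) = u w(u)`. -/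
theorem eigenvalue_ratio_influence_bounded
    {p : ℕ} (hp : 1 ≤ p)
    (V : Matrix (Fin p) (Fin p) ℝ)
    (lam : Fin p → ℝ) (γ : Fin p → EuclideanSpace ℝ (Fin p))
    (hlam_pos : ∀ i, 0 < lam i)
    (hlam_anti : ∀ i i' : Fin p, i < i' → lam i' < lam i)
    (horth : ∀ i i' : Fin p, (∑ k, γ i k * γ i' k) = if i = i' then 1 else 0)
    (hV : ∀ k m : Fin p, V k m = ∑ i, lam i * γ i k * γ i m)
    (i j : Fin p) (hij : i ≠ j) (μ0 : EuclideanSpace ℝ (Fin p))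
    (w : ℝ → ℝ) (hwmeas : Measurable w) (hw0 : ∀ u, 0 ≤ u → 0 ≤ w u)
    (IFij : EuclideanSpace ℝ (Fin p) → ℝ)
    (hIFij : ∀ x, IFij x =
      w (mahal x μ0 V) * (lam j / lam i) *
        ((∑ k, γ j k * (x k - μ0 k)) ^ 2 / lam j -
          (∑ k, γ i k * (x k - μ0 k)) ^ 2 / lam i)) :
    ∀ x : EuclideanSpace ℝ (Fin p),
      |IFij x| ≤ (2 * lam j / lam i) * w (mahal x μ0 V) * mahal x μ0 V := by
  -- Matrix setup
  set G : Matrix (Fin p) (Fin p) ℝ := Matrix.of (fun a k => γ a k) with hG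
  have hGGt : G * Gᵀ = 1 := by
    ext a b
    simp [Matrix.mul_apply, Matrix.one_apply, hG, horth a b]
  have hGtG : Gᵀ * G = 1 := mul_eq_one_comm.mp hGGt
  set D : Matrix (Fin p) (Fin p) ℝ := Matrix.diagonal lam with hD
  set Dinv : Matrix (Fin p) (Fin p) ℝ := Matrix.diagonal (fun a => (lam a)⁻¹) with hDi
  have hVmat : V = Gᵀ * D * G := by
    ext k m
    rw [hV k m]
    simp [Matrix.mul_apply, hG, hD, Matrix.diagonal, Finset.sum_mul]
    apply Finset.sum_congr rfl
    intro a _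
    ring
  set W : Matrix (Fin p) (Fin p) ℝ := Gᵀ * Dinv * G with hW
  have hDDi : D * Dinv = 1 := by
    rw [hD, hDi, Matrix.diagonal_mul_diagonal]
    convert Matrix.diagonal_one
    exact mul_inv_cancel₀ (hlam_pos _).ne'
  have hVW : V * W = 1 := by
    rw [hVmat, hW]
    calc Gᵀ * D * G * (Gᵀ * Dinv * G) = Gᵀ * D * (G * Gᵀ) * Dinv * G := by
          simp only [Matrix.mul_assoc]
      _ = 1 := by rw [hGGt, Matrix.mul_one, Matrix.mul_assoc, Matrix.mul_assoc, ← Matrix.mul_assoc D, hDDi, Matrix.one_mul, hGtG]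
  have hinv : V⁻¹ = W := Matrix.inv_eq_right_inv hVW
  intro x
  set y : Fin p → ℝ := fun k => x k - μ0 k with hy
  set c : Fin p → ℝ := fun a => ∑ k, γ a k * y k with hc
  have hWent : ∀ k m, W k m = ∑ a, γ a k * ((lam a)⁻¹ * γ a m) := by
    intro k m
    simp [hW, Matrix.mul_apply, hDi, Matrix.diagonal, hG, Finset.sum_mul]
    exact Finset.sum_congr rfl fun a _ => by ring
  have hmahal : mahal x μ0 V = ∑ a, (c a) ^ 2 / lam a := by
    rw [mahal, hinv]
    calc (∑ k, ∑ m, (x k - μ0 k) * W k m * (x m - μ0 m))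
        = ∑ k, ∑ m, ∑ a, (lam a)⁻¹ * ((γ a k * y k) * (γ a m * y m)) := by
          apply Finset.sum_congr rfl; intro k _
          apply Finset.sum_congr rfl; intro m _
          rw [hWent k m, Finset.mul_sum, Finset.sum_mul]
          apply Finset.sum_congr rfl; intro a _
          simp [hy]; ring
      _ = ∑ k, ∑ a, ∑ m, (lam a)⁻¹ * ((γ a k * y k) * (γ a m * y m)) := by
          exact Finset.sum_congr rfl fun k _ => Finset.sum_comm
      _ = ∑ a, ∑ k, ∑ m, (lam a)⁻¹ * ((γ a k * y k) * (γ a m * y m)) :=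
          Finset.sum_comm
      _ = ∑ a, (lam a)⁻¹ * ((∑ k, γ a k * y k) * (∑ m, γ a m * y m)) := by
          apply Finset.sum_congr rfl; intro a _
          rw [Finset.sum_mul_sum, Finset.mul_sum]
          exact Finset.sum_congr rfl fun k _ => by rw [Finset.mul_sum]
      _ = ∑ a, (c a) ^ 2 / lam a := by
          apply Finset.sum_congr rfl; intro a _
          rw [hc]; ring
  -- positivity facts
  have hterm : ∀ a, 0 ≤ (c a) ^ 2 / lam a := fun a => div_nonneg (sq_nonneg _) (hlam_pos a).le
  have hd0 : 0 ≤ mahal x μ0 V := by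
    rw [hmahal]; exact Finset.sum_nonneg (fun a _ => hterm a)
  have hle : ∀ a : Fin p, (c a) ^ 2 / lam a ≤ mahal x μ0 V := by
    intro a
    rw [hmahal]
    exact Finset.single_le_sum (fun b _ => hterm b) (Finset.mem_univ a)
  have hwpos : 0 ≤ w (mahal x μ0 V) := hw0 _ hd0
  have hratio : 0 ≤ lam j / lam i := div_nonneg (hlam_pos j).le (hlam_pos i).le
  rw [hIFij x]
  have habs : |(∑ k, γ j k * (x k - μ0 k)) ^ 2 / lam j -
      (∑ k, γ i k * (x k - μ0 k)) ^ 2 / lam i| ≤ 2 * mahal x μ0 V := by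
    have h1 := hle j
    have h2 := hle i
    rw [abs_sub_le_iff]
    constructor
    · have := hterm i
      simp only [hc, hy] at h1 h2 this ⊢
      nlinarith
    · have := hterm j
      simp only [hc, hy] at h1 h2 this ⊢
      nlinarith
  calc |w (mahal x μ0 V) * (lam j / lam i) *
        ((∑ k, γ j k * (x k - μ0 k)) ^ 2 / lam j -
          (∑ k, γ i k * (x k - μ0 k)) ^ 2 / lam i)|
      = w (mahal x μ0 V) * (lam j / lam i) *
        |(∑ k, γ j k * (x k - μ0 k)) ^ 2 / lam j -
          (∑ k, γ i k * (x k - μ0 k)) ^ 2 / lam i| := by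
        rw [abs_mul, abs_of_nonneg (mul_nonneg hwpos hratio)]
    _ ≤ w (mahal x μ0 V) * (lam j / lam i) * (2 * mahal x μ0 V) :=
        mul_le_mul_of_nonneg_left habs (mul_nonneg hwpos hratio)
    _ = (2 * lam j / lam i) * w (mahal x μ0 V) * mahal x μ0 V := by
        field_simp
end

section
/- (Fourth-moment variance identity for eigenvalue ratios, supporting computation for Theorem 5.) Let p ≥ 1 and let g : [0,∞) → [0,∞) be measurable such that y ↦ g(‖y‖²)·‖y‖⁴ is Lebesgue-integrable on ℝ^p. Then for any two orthonormal vectors u, v ∈ ℝ^p (‖u‖ = ‖v‖ = 1, uᵀv = 0): ∫_{ℝ^p} g(‖y‖²) · ( (uᵀy)² − (vᵀy)² )² dy = (4/(p(p+2))) · ∫_{ℝ^p} g(‖y‖²) ‖y‖⁴ dy. -/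
/-!
Write `M(u, v) = ∫ w(y) ⟪u, y⟫² ⟪v, y⟫² dy` for the radial weight `w(y) = g(‖y‖²)`.
Lebesgue measure and `w` are invariant under orthogonal maps, and reflections act transitively
on each sphere, so `M(e, e) = M` is the same for all unit vectors `e`. Rotating an orthonormal
pair `u, v` by 45°, i.e. passing to `(u ± v)/√2`, and using
`((a + b)⁴ + (a - b)⁴) / 4 = (a⁴ + 6a²b² + b⁴) / 2` gives `M(u, v) = M/3`.
Hence the left side is `M(u, u) - 2 M(u, v) + M(v, v) = 4M/3`, while expanding
`‖y‖⁴ = (∑ᵢ ⟪bᵢ, y⟫²)²` in an orthonormal basis gives `∫ w ‖y‖⁴ = pM + p(p - 1)M/3 = p(p + 2)M/3`.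
-/

open MeasureTheory

open scoped RealInnerProductSpace

theorem MeasureTheory.Integrable.mul_of_abs_le_mul {α : Type*} [MeasurableSpace α]
    {μ : Measure α} {w m P : α → ℝ} (hwm : Integrable (fun x => w x * m x) μ)
    (hm : Measurable m) (hP : Measurable P) {C : ℝ} (hPm : ∀ x, |P x| ≤ C * |m x|) :
    Integrable (fun x => w x * P x) μ := by
  -- `w * P = (w * m) * (P / m)`, with `P = 0` wherever `m = 0`, and `|P / m| ≤ |C|`.
  have hfactor : (fun x => w x * P x) = fun x => P x / m x * (w x * m x) := by
    funext x
    by_cases hx : m x = 0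
    · have hPx : P x = 0 := abs_nonpos_iff.mp (by simpa [hx] using hPm x)
      simp [hPx, hx]
    · field_simp
  rw [hfactor]
  refine hwm.bdd_mul (c := |C|) (hP.div hm).aestronglyMeasurable (ae_of_all _ fun x => ?_)
  rw [Real.norm_eq_abs, abs_div]
  exact div_le_of_le_mul₀ (abs_nonneg _) (abs_nonneg _)
    ((hPm x).trans (mul_le_mul_of_nonneg_right (le_abs_self C) (abs_nonneg _)))

theorem LinearIsometryEquiv.integral_comp {E G : Type*} [NormedAddCommGroup E]
    [InnerProductSpace ℝ E] [FiniteDimensional ℝ E] [MeasurableSpace E] [BorelSpace E]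
    [NormedAddCommGroup G] [NormedSpace ℝ G] (e : E ≃ₗᵢ[ℝ] E) (f : E → G) :
    ∫ y, f (e y) = ∫ y, f y :=
  e.measurePreserving.integral_comp e.toMeasurableEquiv.measurableEmbedding f

section FourthMoment

variable {E : Type*} [NormedAddCommGroup E] [InnerProductSpace ℝ E] [FiniteDimensional ℝ E]
  [MeasurableSpace E] [BorelSpace E] (w : E → ℝ)

noncomputable def fourthMoment (u v : E) : ℝ :=
  ∫ y, w y * (⟪u, y⟫ ^ 2 * ⟪v, y⟫ ^ 2)

variable {w}

theorem integrable_mul_inner_sq_mul_inner_sq (hint : Integrable (fun y => w y * ‖y‖ ^ 4))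
    (u v : E) : Integrable (fun y => w y * (⟪u, y⟫ ^ 2 * ⟪v, y⟫ ^ 2)) := by
  refine hint.mul_of_abs_le_mul (by fun_prop) (by fun_prop) (C := ‖u‖ ^ 2 * ‖v‖ ^ 2)
    fun y => ?_
  have hsq : ∀ x : E, ⟪x, y⟫ ^ 2 ≤ ‖x‖ ^ 2 * ‖y‖ ^ 2 := fun x => by
    simpa [sq_abs, mul_pow] using pow_le_pow_left₀ (abs_nonneg _) (abs_real_inner_le_norm x y) 2
  rw [abs_of_nonneg (by positivity), abs_of_nonneg (by positivity)]
  calc ⟪u, y⟫ ^ 2 * ⟪v, y⟫ ^ 2 ≤ (‖u‖ ^ 2 * ‖y‖ ^ 2) * (‖v‖ ^ 2 * ‖y‖ ^ 2) :=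
        mul_le_mul (hsq u) (hsq v) (sq_nonneg _) (by positivity)
    _ = ‖u‖ ^ 2 * ‖v‖ ^ 2 * ‖y‖ ^ 4 := by ring

theorem integral_mul_quartic_form (hint : Integrable (fun y => w y * ‖y‖ ^ 4))
    (u v : E) (α β γ : ℝ) :
    ∫ y, w y * (α * (⟪u, y⟫ ^ 2 * ⟪u, y⟫ ^ 2) + β * (⟪u, y⟫ ^ 2 * ⟪v, y⟫ ^ 2)
        + γ * (⟪v, y⟫ ^ 2 * ⟪v, y⟫ ^ 2)) =
      α * fourthMoment w u u + β * fourthMoment w u v + γ * fourthMoment w v v := by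
  have hI := integrable_mul_inner_sq_mul_inner_sq hint
  have hsplit : (fun y => w y * (α * (⟪u, y⟫ ^ 2 * ⟪u, y⟫ ^ 2)
      + β * (⟪u, y⟫ ^ 2 * ⟪v, y⟫ ^ 2) + γ * (⟪v, y⟫ ^ 2 * ⟪v, y⟫ ^ 2))) = fun y =>
      α * (w y * (⟪u, y⟫ ^ 2 * ⟪u, y⟫ ^ 2)) + β * (w y * (⟪u, y⟫ ^ 2 * ⟪v, y⟫ ^ 2))
        + γ * (w y * (⟪v, y⟫ ^ 2 * ⟪v, y⟫ ^ 2)) := by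
    funext y; ring
  have h12 : Integrable fun y => α * (w y * (⟪u, y⟫ ^ 2 * ⟪u, y⟫ ^ 2))
      + β * (w y * (⟪u, y⟫ ^ 2 * ⟪v, y⟫ ^ 2)) :=
    ((hI u u).const_mul α).add ((hI u v).const_mul β)
  rw [hsplit, integral_add h12 ((hI v v).const_mul γ),
    integral_add ((hI u u).const_mul α) ((hI u v).const_mul β),
    integral_const_mul, integral_const_mul, integral_const_mul]
  rfl

theorem fourthMoment_map (hw : ∀ (e : E ≃ₗᵢ[ℝ] E) y, w (e y) = w y) (e : E ≃ₗᵢ[ℝ] E)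
    (u v : E) : fourthMoment w (e u) (e v) = fourthMoment w u v := by
  rw [fourthMoment, fourthMoment, ← e.integral_comp]
  simp only [hw, LinearIsometryEquiv.inner_map_map]

theorem fourthMoment_self_eq_of_norm_eq (hw : ∀ (e : E ≃ₗᵢ[ℝ] E) y, w (e y) = w y)
    {u u' : E} (h : ‖u‖ = ‖u'‖) : fourthMoment w u u = fourthMoment w u' u' := by
  rw [← fourthMoment_map hw (ℝ ∙ (u - u'))ᗮ.reflection, Submodule.reflection_sub h]

theorem fourthMoment_self_eq_three_mul (hw : ∀ (e : E ≃ₗᵢ[ℝ] E) y, w (e y) = w y)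
    (hint : Integrable (fun y => w y * ‖y‖ ^ 4)) {u v : E} (hnorm : ‖u‖ = ‖v‖)
    (huv : ⟪u, v⟫ = 0) : fourthMoment w u u = 3 * fourthMoment w u v := by
  set c : ℝ := (√2)⁻¹
  have hc : c ^ 2 = 1 / 2 := by simp [c, inv_pow]
  have hnorm_rot : ∀ s : ℝ, s ^ 2 = 1 → ‖c • (u + s • v)‖ = ‖u‖ := fun s hs => by
    refine (sq_eq_sq₀ (norm_nonneg _) (norm_nonneg _)).mp ?_
    rw [norm_smul, mul_pow, norm_add_sq_real, real_inner_smul_right, norm_smul, mul_pow, huv]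
    simp only [Real.norm_eq_abs, sq_abs, hs, hc, ← hnorm]
    ring
  have hplus : fourthMoment w (c • (u + v)) (c • (u + v)) = fourthMoment w u u :=
    fourthMoment_self_eq_of_norm_eq hw (by simpa using hnorm_rot 1 (by norm_num))
  have hminus : fourthMoment w (c • (u - v)) (c • (u - v)) = fourthMoment w u u :=
    fourthMoment_self_eq_of_norm_eq hw
      (by simpa [← sub_eq_add_neg] using hnorm_rot (-1) (by norm_num))
  have hrot : ∀ y, 1 * (⟪c • (u + v), y⟫ ^ 2 * ⟪c • (u + v), y⟫ ^ 2)
      + 0 * (⟪c • (u + v), y⟫ ^ 2 * ⟪c • (u - v), y⟫ ^ 2)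
      + 1 * (⟪c • (u - v), y⟫ ^ 2 * ⟪c • (u - v), y⟫ ^ 2)
      = 1 / 2 * (⟪u, y⟫ ^ 2 * ⟪u, y⟫ ^ 2) + 3 * (⟪u, y⟫ ^ 2 * ⟪v, y⟫ ^ 2)
        + 1 / 2 * (⟪v, y⟫ ^ 2 * ⟪v, y⟫ ^ 2) := fun y => by
    simp only [real_inner_smul_left, inner_add_left, inner_sub_left]
    linear_combination 2 * (c ^ 2 + 1 / 2) * (⟪u, y⟫ ^ 4 + 6 * ⟪u, y⟫ ^ 2 * ⟪v, y⟫ ^ 2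
      + ⟪v, y⟫ ^ 4) * hc
  have hsum := integral_mul_quartic_form hint (c • (u + v)) (c • (u - v)) 1 0 1
  simp only [hrot, integral_mul_quartic_form hint, hplus, hminus,
    fourthMoment_self_eq_of_norm_eq hw hnorm.symm] at hsum
  linarith

theorem integral_mul_inner_sq_sub_inner_sq_sq_eq_fourthMoment
    (hint : Integrable (fun y => w y * ‖y‖ ^ 4)) (u v : E) :
    ∫ y, w y * (⟪u, y⟫ ^ 2 - ⟪v, y⟫ ^ 2) ^ 2 =
      fourthMoment w u u - 2 * fourthMoment w u v + fourthMoment w v v := by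
  rw [← one_mul (fourthMoment w u u), ← one_mul (fourthMoment w v v), sub_eq_add_neg,
    ← neg_mul, ← integral_mul_quartic_form hint]
  congr 1 with y
  ring

theorem integral_mul_norm_pow_four_eq_sum_fourthMoment
    (hint : Integrable (fun y => w y * ‖y‖ ^ 4)) {ι : Type*} [Fintype ι]
    (b : OrthonormalBasis ι ℝ E) :
    ∫ y, w y * ‖y‖ ^ 4 = ∑ i, ∑ j, fourthMoment w (b i) (b j) := by
  have hI := integrable_mul_inner_sq_mul_inner_sq hint
  have hexpand : ∀ y : E, w y * ‖y‖ ^ 4 = ∑ i, ∑ j, w y * (⟪b i, y⟫ ^ 2 * ⟪b j, y⟫ ^ 2) := by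
    intro y
    rw [show ‖y‖ ^ 4 = ‖y‖ ^ 2 * ‖y‖ ^ 2 by ring, ← b.sum_sq_inner_right, Finset.sum_mul_sum,
      Finset.mul_sum]
    simp_rw [Finset.mul_sum]
  simp only [hexpand, fourthMoment]
  rw [integral_finsetSum _ fun i _ => integrable_finsetSum _ fun j _ => hI (b i) (b j)]
  simp_rw [integral_finsetSum _ fun j _ => hI _ _]

theorem integral_mul_inner_sq_sub_inner_sq_sq (hw : ∀ (e : E ≃ₗᵢ[ℝ] E) y, w (e y) = w y)
    (hint : Integrable (fun y => w y * ‖y‖ ^ 4)) {u v : E} (hu : ‖u‖ = 1) (hv : ‖v‖ = 1)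
    (huv : ⟪u, v⟫ = 0) :
    ∫ y, w y * (⟪u, y⟫ ^ 2 - ⟪v, y⟫ ^ 2) ^ 2 =
      4 / (Module.finrank ℝ E * (Module.finrank ℝ E + 2)) * ∫ y, w y * ‖y‖ ^ 4 := by
  set n := Module.finrank ℝ E
  set M := fourthMoment w u u
  have hn : (n : ℝ) ≠ 0 := by
    have : Nontrivial E := nontrivial_of_ne u 0 (norm_ne_zero_iff.mp (by simp [hu]))
    exact_mod_cast Module.finrank_pos.ne'
  have hdiag : ∀ x : E, ‖x‖ = 1 → fourthMoment w x x = M := fun x hx =>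
    fourthMoment_self_eq_of_norm_eq hw (hx.trans hu.symm)
  have hoff : ∀ x z : E, ‖x‖ = 1 → ‖z‖ = 1 → ⟪x, z⟫ = 0 → fourthMoment w x z = M / 3 :=
    fun x z hx hz hxz => by
      rw [← hdiag x hx, fourthMoment_self_eq_three_mul hw hint (hx.trans hz.symm) hxz]
      ring
  let b := stdOrthonormalBasis ℝ E
  have hentry : ∀ i j, fourthMoment w (b i) (b j) = M / 3 + if i = j then 2 * M / 3 else 0 := by
    intro i j
    split_ifs with hij
    · rw [hij, hdiag _ (b.orthonormal.1 j)]; ring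
    · rw [hoff _ _ (b.orthonormal.1 i) (b.orthonormal.1 j) (b.orthonormal.2 hij), add_zero]
  rw [integral_mul_inner_sq_sub_inner_sq_sq_eq_fourthMoment hint, hdiag v hv, hoff u v hu hv huv,
    integral_mul_norm_pow_four_eq_sum_fourthMoment hint b]
  simp only [hentry, Finset.sum_add_distrib, Finset.sum_ite_eq, Finset.mem_univ, if_true,
    Finset.sum_const, Finset.card_univ, Fintype.card_fin, nsmul_eq_mul]
  field_simp
  ring

end FourthMoment

theorem spherical_fourth_moment_variance_general
    {p : ℕ}
    (g : ℝ → ℝ)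
    (hint : Integrable (fun y : EuclideanSpace ℝ (Fin p) => g (‖y‖ ^ 2) * ‖y‖ ^ 4))
    (u v : EuclideanSpace ℝ (Fin p))
    (hu : ‖u‖ = 1) (hv : ‖v‖ = 1) (huv : (∑ k, u k * v k) = 0) :
    ∫ y : EuclideanSpace ℝ (Fin p),
        g (‖y‖ ^ 2) * ((∑ k, u k * y k) ^ 2 - (∑ k, v k * y k) ^ 2) ^ 2 =
      (4 / (p * (p + 2) : ℝ)) *
        ∫ y : EuclideanSpace ℝ (Fin p), g (‖y‖ ^ 2) * ‖y‖ ^ 4 := by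
  have hinner : ∀ a y : EuclideanSpace ℝ (Fin p), ∑ k, a k * y k = ⟪a, y⟫ := fun a y => by
    simp [PiLp.inner_apply, mul_comm]
  simp only [hinner] at huv ⊢
  simpa using integral_mul_inner_sq_sub_inner_sq_sq (w := fun y => g (‖y‖ ^ 2))
    (fun e y => by rw [e.norm_map]) hint hu hv huv

/-- fourth-moment variance identity for eigenvalue ratios.
If `y ↦ g(‖y‖²) ‖y‖⁴` is Lebesgue-integrable on `ℝ^p` with `g ≥ 0`, then for
any two orthonormal vectors `u, v ∈ ℝ^p`,
`∫ g(‖y‖²) ((uᵀy)² − (vᵀy)²)² dy = (4/(p(p+2))) ∫ g(‖y‖²) ‖y‖⁴ dy`. -/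
theorem spherical_fourth_moment_variance
    {p : ℕ} (hp : 1 ≤ p)
    (g : ℝ → ℝ) (hg : Measurable g) (hg0 : ∀ t, 0 ≤ t → 0 ≤ g t)
    (hint : Integrable (fun y : EuclideanSpace ℝ (Fin p) => g (‖y‖ ^ 2) * ‖y‖ ^ 4))
    (u v : EuclideanSpace ℝ (Fin p))
    (hu : ‖u‖ = 1) (hv : ‖v‖ = 1) (huv : (∑ k, u k * v k) = 0) :
    ∫ y : EuclideanSpace ℝ (Fin p),
        g (‖y‖ ^ 2) * ((∑ k, u k * y k) ^ 2 - (∑ k, v k * y k) ^ 2) ^ 2 =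
      (4 / (p * (p + 2) : ℝ)) *
        ∫ y : EuclideanSpace ℝ (Fin p), g (‖y‖ ^ 2) * ‖y‖ ^ 4 :=
  spherical_fourth_moment_variance_general g hint u v hu hv huv
end
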